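/- Both the sieve set P' and its complement within the primes are infinite: P' is an infinite proper subset of the set of all primes, and the set of primes not belonging to P' is also infinite. -/
import Mathlib

/-- `nthPrime n` is the n-th prime with `nthPrime 1 = 2`. -/
noncomputable def nthPrime (n : ℕ) : ℕ := Nat.nth Nat.Prime (n - 1)

/-- 0-indexed index sequence of the sieve: `sieveIdx 0 = k_1 = 1`, and
`sieveIdx n = k_{n+1}` is the least natural number greater than `k_n` that does
not occur among the previously produced values `p'_1, ..., p'_n`. -/
noncomputable def sieveIdx : ℕ → ℕ
  | 0 => 1
  | n + 1 => sInf {m : ℕ | sieveIdx n < m ∧ ∀ i ≤ n, nthPrime (sieveIdx i) ≠ m}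

/-- `pP n = p'_n` (for `n ≥ 1`), the n-th term of the sieve sequence P'. -/
noncomputable def pP (n : ℕ) : ℕ := nthPrime (sieveIdx (n - 1))

/-- The sieve set P' = {p'_n : n ≥ 1}. -/
noncomputable def PprimeSet : Set ℕ := Set.range (fun n : ℕ => nthPrime (sieveIdx n))

lemma hinf : {n : ℕ | n.Prime}.Infinite := Nat.infinite_setOf_prime

lemma nthPrime_prime (n : ℕ) : (nthPrime n).Prime := Nat.prime_nth_prime _

lemma nth_prime_ge (k : ℕ) : k + 2 ≤ Nat.nth Nat.Prime k := by
  induction k with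
  | zero =>
    have : Nat.nth Nat.Prime (Nat.count Nat.Prime 2) = 2 := Nat.nth_count (by norm_num)
    have h2 : Nat.count Nat.Prime 2 = 0 := by decide
    rw [h2] at this; omega
  | succ k ih =>
    have := Nat.nth_strictMono (p := Nat.Prime) hinf (Nat.lt_succ_self k)
    simp only [Nat.succ_eq_add_one] at this
    omega

lemma sieve_step (n : ℕ) : sieveIdx n < sieveIdx (n + 1) ∧
    ∀ i ≤ n, nthPrime (sieveIdx i) ≠ sieveIdx (n + 1) := by
  have hne : {m : ℕ | sieveIdx n < m ∧ ∀ i ≤ n, nthPrime (sieveIdx i) ≠ m}.Nonempty := by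
    refine ⟨(Finset.range (n+1)).sup (fun i => nthPrime (sieveIdx i)) + sieveIdx n + 1, ?_, ?_⟩
    · omega
    · intro i hi h
      have : nthPrime (sieveIdx i) ≤ (Finset.range (n+1)).sup (fun i => nthPrime (sieveIdx i)) :=
        Finset.le_sup (f := fun i => nthPrime (sieveIdx i)) (Finset.mem_range.mpr (Nat.lt_succ_of_le hi))
      omega
  have hmem : sieveIdx (n + 1) ∈ {m : ℕ | sieveIdx n < m ∧ ∀ i ≤ n, nthPrime (sieveIdx i) ≠ m} := by
    rw [sieveIdx]; exact Nat.sInf_mem hne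
  exact ⟨hmem.1, hmem.2⟩

lemma sieve_mono : StrictMono sieveIdx :=
  strictMono_nat_of_lt_succ (fun n => (sieve_step n).1)

lemma sieve_pos (n : ℕ) : 1 ≤ sieveIdx n := by
  cases n with
  | zero => rw [sieveIdx]
  | succ n =>
    have := sieve_mono (Nat.succ_pos n)
    have h0 : sieveIdx 0 = 1 := by rw [sieveIdx]
    simp only [Nat.succ_eq_add_one] at this
    omega

lemma val_gt_idx (n : ℕ) : sieveIdx n < nthPrime (sieveIdx n) := by
  have h1 := sieve_pos n
  have := nth_prime_ge (sieveIdx n - 1)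
  unfold nthPrime; omega

lemma not_idx (n m : ℕ) : sieveIdx m ≠ nthPrime (sieveIdx n) := by
  rcases le_or_gt m n with h | h
  · have : sieveIdx m ≤ sieveIdx n := sieve_mono.monotone h
    have := val_gt_idx n
    omega
  · obtain ⟨j, rfl⟩ : ∃ j, m = j + 1 := ⟨m - 1, by omega⟩
    exact fun he => (sieve_step j).2 n (by omega) he.symm

lemma val_strictMono : StrictMono (fun n => nthPrime (sieveIdx n)) := by
  intro a b h
  have := sieve_mono h
  have ha := sieve_pos a
  exact Nat.nth_strictMono (p := Nat.Prime) hinf (show sieveIdx a - 1 < sieveIdx b - 1 by omega)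

lemma nthPrime_inj {a b : ℕ} (ha : 1 ≤ a) (hb : 1 ≤ b) (h : nthPrime a = nthPrime b) :
    a = b := by
  have := Nat.nth_injective hinf h
  omega

/-- P' is an infinite proper subset of the set of all primes, and the set of
primes not belonging to P' is also infinite. -/
theorem stmt11 :
    PprimeSet.Infinite ∧ PprimeSet ⊂ {q : ℕ | q.Prime} ∧
    {q : ℕ | q.Prime ∧ q ∉ PprimeSet}.Infinite := by
  have hsub : PprimeSet ⊆ {q : ℕ | q.Prime} := by
    rintro x ⟨n, rfl⟩; exact nthPrime_prime _
  have h3 : (3 : ℕ) ∉ PprimeSet := by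
    rintro ⟨n, hn⟩
    have h31 : nthPrime 2 = 3 := by
      have : Nat.nth Nat.Prime (Nat.count Nat.Prime 3) = 3 := Nat.nth_count (by norm_num)
      have hc : Nat.count Nat.Prime 3 = 1 := by decide
      simp only [hc] at this
      simp only [nthPrime, Nat.add_sub_cancel] at this ⊢; exact this
    have := nthPrime_inj (sieve_pos n) (by norm_num) (hn.trans h31.symm)
    -- sieveIdx n = 2, but sieveIdx 0 = 1 and not_idx says sieveIdx n ≠ nthPrime (sieveIdx 0)
    have h2 : nthPrime (sieveIdx 0) = 2 := by
      have h20 : Nat.nth Nat.Prime (Nat.count Nat.Prime 2) = 2 := Nat.nth_count (by norm_num)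
      have hc : Nat.count Nat.Prime 2 = 0 := by decide
      simp only [hc] at h20
      rw [show sieveIdx 0 = 1 from by rw [sieveIdx]]
      simp only [nthPrime, Nat.sub_self] at h20 ⊢; exact h20
    have := not_idx 0 n
    omega
  refine ⟨Set.infinite_range_of_injective val_strictMono.injective, ⟨hsub, ?_⟩, ?_⟩
  · intro hba
    exact h3 (hba (by norm_num : (3 : ℕ).Prime))
  · have hg : Set.range (fun n => nthPrime (nthPrime (sieveIdx n))) ⊆
        {q : ℕ | q.Prime ∧ q ∉ PprimeSet} := by
      rintro x ⟨n, rfl⟩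
      refine ⟨nthPrime_prime _, ?_⟩
      rintro ⟨m, hm⟩
      have h1 := sieve_pos m
      have h2 := (val_gt_idx n).trans_le' (sieve_pos n)
      have := nthPrime_inj (sieve_pos m) (by omega) hm
      exact not_idx n m this
    refine Set.Infinite.mono hg (Set.infinite_range_of_injective ?_)
    intro a b h
    have ha := (val_gt_idx a).trans_le' (sieve_pos a)
    have hb := (val_gt_idx b).trans_le' (sieve_pos b)
    have := nthPrime_inj (by omega) (by omega) h
    exact val_strictMono.injective this
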